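/- For every weighted graph G on a finite vertex set V of N vertices (given by a symmetric weight function into [0,1]) there exists an unweighted graph G' on the same vertex set (a symmetric function into {0,1}) such that for every positive integer k and every partition P of V into at most k nonempty parts, |irreg_{G'}(P) − irreg_G(P)| ≤ 8k²N^{3/2}. -/

import Mathlib

/-!
Round each unordered pair `{x, y}` independently to an edge with probability `w x y`. For fixed
`U, W` the discrepancy `e_{G'}(U, W) - e_G(U, W)` is a sum of independent centred terms, one per
unordered pair `p`, ranging over an interval of length `pairCount U W p ≤ 2`. As
`∑ pairCount² ≤ 2N²`, Hoeffding bounds the probability that it exceeds `4N^{3/2}` in absolute value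
by `2e^{-16N}`, and a union bound over the `4^N` choices of `(U, W)` leaves a rounding in which all
these discrepancies are at most `4N^{3/2}`. Since `U ⊆ X` and `W ⊆ Y`, such a rounding moves each
term `|e(U, W) - |U||W| d(X, Y)|` by at most twice that, hence `irreg(X, Y)` by at most `8N^{3/2}`
and `irreg(P)` by at most `8k²N^{3/2}`.
-/

open Finset

/-- The sum of weights over ordered pairs in `A × B` in a weighted graph `w`. -/
def weightSum {V : Type*} (w : V → V → ℝ) (A B : Finset V) : ℝ :=
  ∑ x ∈ A, ∑ y ∈ B, w x y

/-- The weighted edge density between `X` and `Y`. -/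
noncomputable def wDensity {V : Type*} (w : V → V → ℝ) (X Y : Finset V) : ℝ :=
  weightSum w X Y / ((X.card : ℝ) * (Y.card : ℝ))

/-- The irregularity of the pair `X, Y` in a weighted graph `w`. -/
noncomputable def wIrregPair {V : Type*} [DecidableEq V] (w : V → V → ℝ)
    (X Y : Finset V) : ℝ :=
  (X.powerset ×ˢ Y.powerset).sup'
    ⟨(∅, ∅), by simp⟩
    (fun UW => |weightSum w UW.1 UW.2 - (UW.1.card : ℝ) * (UW.2.card : ℝ) * wDensity w X Y|)

/-- The irregularity of a vertex partition in a weighted graph `w`. -/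
noncomputable def wIrregPartition {V : Type*} [DecidableEq V] (w : V → V → ℝ)
    (P : Finset (Finset V)) : ℝ :=
  ∑ X ∈ P, ∑ Y ∈ P, wIrregPair w X Y

/-- `P` is a partition of the vertex set into nonempty parts. -/
def IsPartition {V : Type*} [Fintype V] [DecidableEq V] (P : Finset (Finset V)) : Prop :=
  (∀ p ∈ P, p.Nonempty) ∧ (∀ p ∈ P, ∀ q ∈ P, p ≠ q → Disjoint p q) ∧
    P.biUnion id = Finset.univ

open MeasureTheory ProbabilityTheory unitInterval Real
open scoped NNReal

lemma ProbabilityTheory.HasSubgaussianMGF.mono {Ω : Type*} {mΩ : MeasurableSpace Ω}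
    {μ : Measure Ω} {X : Ω → ℝ} {c c' : ℝ≥0} (h : HasSubgaussianMGF X c μ) (hc : c ≤ c') :
    HasSubgaussianMGF X c' μ :=
  ⟨h.integrable_exp_mul, fun t => (h.mgf_le t).trans (exp_le_exp.2 (by gcongr))⟩

section BernoulliRounding

variable {ι : Type*} [Fintype ι] (q : ι → I)

noncomputable abbrev bernoulliPi : Measure (ι → Bool) :=
  Measure.pi fun i => Ber(true, false, q i)

lemma integral_toNat_bernoulliPi (i : ι) :
    ∫ ω, ((ω i).toNat : ℝ) ∂(bernoulliPi q) = q i := by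
  refine (integral_comp_eval (μ := fun j => Ber(true, false, q j)) (i := i)
    (f := fun b : Bool => (b.toNat : ℝ)) (measurable_of_countable _).aestronglyMeasurable).trans ?_
  simp [integral_bernoulliMeasure]

lemma hasSubgaussianMGF_mul_toNat_sub (a : ι → ℝ) (i : ι) :
    HasSubgaussianMGF (fun ω : ι → Bool => a i * ((ω i).toNat - q i)) ((‖a i‖₊ / 2) ^ 2)
      (bernoulliPi q) := by
  have h := hasSubgaussianMGF_of_mem_Icc (μ := bernoulliPi q)
    (X := fun ω => ((ω i).toNat : ℝ)) (a := 0) (b := 1)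
    (measurable_of_countable _).aemeasurable (ae_of_all _ fun ω => by cases ω i <;> simp)
  rw [integral_toNat_bernoulliPi] at h
  have hc : (‖a i‖₊ / 2) ^ 2 = NNReal.mk (a i ^ 2) (sq_nonneg _) * (‖(1 : ℝ) - 0‖₊ / 2) ^ 2 := by
    ext
    simp [div_pow]
    ring
  exact hc ▸ h.const_mul (a i)

lemma bernoulliPi_real_sum_mul_toNat_sub_ge_le (a : ι → ℝ) {s : ℝ≥0} (hs : ∑ i, a i ^ 2 ≤ s)
    {ε : ℝ} (hε : 0 ≤ ε) :
    (bernoulliPi q).real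
      {ω | ε ≤ ∑ i, a i * ((ω i).toNat - q i)} ≤ exp (-2 * ε ^ 2 / s) := by
  have hindep := iIndepFun_pi (μ := fun i => Ber(true, false, q i))
    (X := fun i b => a i * ((b.toNat : ℝ) - q i)) fun i => (measurable_of_countable _).aemeasurable
  have hsum := (HasSubgaussianMGF.sum_of_iIndepFun hindep (s := Finset.univ)
    fun i _ => hasSubgaussianMGF_mul_toNat_sub q a i).mono (c' := s / 4) ?_
  · refine (hsum.measure_ge_le hε).trans_eq ?_
    congr 1
    push_cast
    ring
  · rw [← NNReal.coe_le_coe]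
    push_cast
    simp only [div_pow, norm_eq_abs, sq_abs, ← Finset.sum_div]
    linarith

lemma exists_forall_abs_sum_mul_toNat_sub_lt {J : Type*} [Fintype J] (a : J → ι → ℝ)
    {s : ℝ≥0} (hs : ∀ j, ∑ i, a j i ^ 2 ≤ s) {t : ℝ} (ht : 0 ≤ t)
    (hJ : 2 * Fintype.card J * exp (-2 * t ^ 2 / s) < 1) :
    ∃ ω : ι → Bool, ∀ j, |∑ i, a j i * ((ω i).toNat - q i)| < t := by
  set μ := bernoulliPi q
  let upper : J → Set (ι → Bool) := fun j => {ω | t ≤ ∑ i, a j i * ((ω i).toNat - q i)}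
  let lower : J → Set (ι → Bool) := fun j => {ω | t ≤ ∑ i, -a j i * ((ω i).toNat - q i)}
  have hbad : μ.real (⋃ j, upper j ∪ lower j) < 1 := calc
    _ ≤ ∑ j, (μ.real (upper j) + μ.real (lower j)) :=
      (measureReal_iUnion_fintype_le _).trans
        (Finset.sum_le_sum fun j _ => measureReal_union_le _ _)
    _ ≤ ∑ _j : J, 2 * exp (-2 * t ^ 2 / s) := Finset.sum_le_sum fun j _ => by
      have hu := bernoulliPi_real_sum_mul_toNat_sub_ge_le q (a j) (hs j) ht
      have hl := bernoulliPi_real_sum_mul_toNat_sub_ge_le q (fun i => -a j i)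
        (by simpa using hs j) ht
      linarith
    _ = 2 * Fintype.card J * exp (-2 * t ^ 2 / s) := by simp; ring
    _ < 1 := hJ
  obtain ⟨ω, hω⟩ : (⋃ j, upper j ∪ lower j)ᶜ.Nonempty := by
    rw [Set.nonempty_compl]
    intro h
    rw [h, probReal_univ] at hbad
    exact lt_irrefl _ hbad
  refine ⟨ω, fun j => ?_⟩
  simp only [Set.mem_compl_iff, Set.mem_iUnion, Set.mem_union, not_exists, not_or, upper, lower,
    Set.mem_ofPred_eq, not_le, neg_mul, Finset.sum_neg_distrib] at hω
  obtain ⟨hupper, hlower⟩ := hω j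
  exact abs_lt.2 ⟨by linarith, hupper⟩

end BernoulliRounding

section PairCount

variable {V : Type*} [DecidableEq V]

def pairCount (U W : Finset V) (p : Sym2 V) : ℕ :=
  #{q ∈ U ×ˢ W | s(q.1, q.2) = p}

lemma pairCount_le_two (U W : Finset V) (p : Sym2 V) : pairCount U W p ≤ 2 := by
  induction p using Sym2.ind with
  | _ x y =>
    refine (card_le_card fun q hq => ?_).trans (card_le_two (a := (x, y)) (b := (y, x)))
    rw [mem_filter] at hq
    rcases Sym2.eq_iff.1 hq.2 with ⟨h₁, h₂⟩ | ⟨h₁, h₂⟩ <;> simp [← h₁, ← h₂]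

variable [Fintype V]

lemma weightSum_eq_sum_pairCount_mul (F : Sym2 V → ℝ) (U W : Finset V) :
    weightSum (fun x y => F s(x, y)) U W = ∑ p, (pairCount U W p : ℝ) * F p := by
  rw [weightSum, ← sum_product' (f := fun x y => F s(x, y)), ← sum_fiberwise' (U ×ˢ W) (fun q => s(q.1, q.2)) F]
  simp [pairCount]

lemma sum_pairCount_sq_le (U W : Finset V) :
    ∑ p, (pairCount U W p : ℝ) ^ 2 ≤ 2 * (Fintype.card V : ℝ) ^ 2 := by
  have hsum : ∑ p, (pairCount U W p : ℝ) = #U * #W := by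
    simpa [weightSum] using (weightSum_eq_sum_pairCount_mul (fun _ => 1) U W).symm
  have hU : (#U : ℝ) ≤ Fintype.card V := by exact_mod_cast card_le_univ U
  have hW : (#W : ℝ) ≤ Fintype.card V := by exact_mod_cast card_le_univ W
  calc ∑ p, (pairCount U W p : ℝ) ^ 2 ≤ ∑ p, 2 * (pairCount U W p : ℝ) :=
        sum_le_sum fun p _ => by
          have : (pairCount U W p : ℝ) ≤ 2 := by exact_mod_cast pairCount_le_two U W p
          nlinarith [(pairCount U W p).cast_nonneg (α := ℝ)]
    _ = 2 * (#U * #W) := by rw [← mul_sum, hsum]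
    _ ≤ 2 * (Fintype.card V : ℝ) ^ 2 := by gcongr; nlinarith

end PairCount

section Irregularity

variable {V : Type*} {g w : V → V → ℝ} {t : ℝ}

lemma card_mul_card_mul_abs_wDensity_sub_le {U W X Y : Finset V} (hU : U ⊆ X) (hW : W ⊆ Y) :
    (#U * #W : ℝ) * |wDensity g X Y - wDensity w X Y| ≤ |weightSum g X Y - weightSum w X Y| := by
  have hUW : (#U * #W : ℝ) ≤ #X * #Y := by gcongr
  rw [wDensity, wDensity, ← sub_div, abs_div, abs_of_nonneg (by positivity : (0 : ℝ) ≤ #X * #Y)]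
  calc (#U * #W : ℝ) * (|weightSum g X Y - weightSum w X Y| / (#X * #Y))
      ≤ #X * #Y * (|weightSum g X Y - weightSum w X Y| / (#X * #Y)) := by gcongr
    _ ≤ |weightSum g X Y - weightSum w X Y| := by
        rcases eq_or_ne ((#X : ℝ) * #Y) 0 with h | h
        · simp [h]
        · rw [mul_div_cancel₀ _ h]

variable [DecidableEq V]

lemma wIrregPair_le_add (hbox : ∀ U W : Finset V, |weightSum g U W - weightSum w U W| ≤ t)
    (X Y : Finset V) : wIrregPair g X Y ≤ wIrregPair w X Y + 2 * t := by
  refine sup'_le _ _ fun UW hUW => ?_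
  obtain ⟨U, W⟩ := UW
  obtain ⟨hU, hW⟩ := mem_product.1 hUW
  have hsplit : weightSum g U W - #U * #W * wDensity g X Y
      = (weightSum w U W - #U * #W * wDensity w X Y) + (weightSum g U W - weightSum w U W)
        - #U * #W * (wDensity g X Y - wDensity w X Y) := by ring
  have hdensity : |(#U * #W : ℝ) * (wDensity g X Y - wDensity w X Y)| ≤ t := by
    rw [abs_mul, abs_of_nonneg (by positivity)]
    exact (card_mul_card_mul_abs_wDensity_sub_le (mem_powerset.1 hU) (mem_powerset.1 hW)).trans
      (hbox X Y)
  calc |weightSum g U W - #U * #W * wDensity g X Y|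
      ≤ |weightSum w U W - #U * #W * wDensity w X Y| + |weightSum g U W - weightSum w U W|
        + |(#U * #W : ℝ) * (wDensity g X Y - wDensity w X Y)| := by
        rw [hsplit]
        exact (abs_sub _ _).trans (add_le_add_left (abs_add_le _ _) _)
    _ ≤ wIrregPair w X Y + t + t := by
        gcongr
        · exact le_sup' (fun UW : Finset V × Finset V => |weightSum w UW.1 UW.2
            - (#UW.1 : ℝ) * #UW.2 * wDensity w X Y|) hUW
        · exact hbox U W
    _ = wIrregPair w X Y + 2 * t := by ring

lemma abs_wIrregPair_sub_le (hbox : ∀ U W : Finset V, |weightSum g U W - weightSum w U W| ≤ t)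
    (X Y : Finset V) : |wIrregPair g X Y - wIrregPair w X Y| ≤ 2 * t := by
  have hbox' : ∀ U W : Finset V, |weightSum w U W - weightSum g U W| ≤ t :=
    fun U W => abs_sub_comm (weightSum g U W) _ ▸ hbox U W
  have := wIrregPair_le_add hbox X Y
  have := wIrregPair_le_add hbox' X Y
  exact abs_sub_le_iff.2 ⟨by linarith, by linarith⟩

lemma abs_wIrregPartition_sub_le
    (hbox : ∀ U W : Finset V, |weightSum g U W - weightSum w U W| ≤ t) (P : Finset (Finset V)) :
    |wIrregPartition g P - wIrregPartition w P| ≤ 2 * #P ^ 2 * t := by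
  calc |wIrregPartition g P - wIrregPartition w P|
      = |∑ X ∈ P, ∑ Y ∈ P, (wIrregPair g X Y - wIrregPair w X Y)| := by
        simp only [wIrregPartition, ← sum_sub_distrib]
    _ ≤ ∑ X ∈ P, ∑ Y ∈ P, 2 * t :=
        (abs_sum_le_sum_abs _ _).trans <| sum_le_sum fun X _ => (abs_sum_le_sum_abs _ _).trans <|
          sum_le_sum fun Y _ => abs_wIrregPair_sub_le hbox X Y
    _ = 2 * #P ^ 2 * t := by simp; ring

end Irregularity

section Rounding

variable {V : Type*} [Fintype V] [DecidableEq V]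

lemma exists_forall_abs_sum_pairCount_mul_le (q : Sym2 V → I) :
    ∃ ω : Sym2 V → Bool, ∀ U W : Finset V,
      |∑ p, (pairCount U W p : ℝ) * ((ω p).toNat - q p)|
        ≤ 4 * (Fintype.card V : ℝ) ^ ((3 : ℝ) / 2) := by
  rcases (Fintype.card V).eq_zero_or_pos with hN | hN
  · have : IsEmpty V := Fintype.card_eq_zero_iff.1 hN
    exact ⟨fun _ => false, fun U W => by simp only [univ_eq_empty, sum_empty, abs_zero]; positivity⟩
  set N := Fintype.card V
  have hN1 : (1 : ℝ) ≤ N := by exact_mod_cast hN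
  have ht : (4 * (N : ℝ) ^ ((3 : ℝ) / 2)) ^ 2 = 16 * N ^ 3 := by
    rw [mul_pow, ← rpow_natCast ((N : ℝ) ^ ((3 : ℝ) / 2)), ← rpow_mul (by positivity)]
    norm_num
  have h2e : (2 : ℝ) ≤ exp 1 := by linarith [add_one_le_exp (1 : ℝ)]
  have hpow : (2 : ℝ) ^ N ≤ exp N := by
    rw [← exp_one_pow]
    gcongr
  have hcount : 2 * Fintype.card (Finset V × Finset V)
      * exp (-2 * (4 * (N : ℝ) ^ ((3 : ℝ) / 2)) ^ 2 / (2 * N ^ 2)) < 1 := by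
    rw [ht, Fintype.card_prod, Fintype.card_finset]
    calc 2 * ((2 ^ N * 2 ^ N : ℕ) : ℝ) * exp (-2 * (16 * N ^ 3) / (2 * N ^ 2))
        = 2 * (2 ^ N * 2 ^ N) * exp (-(16 * N)) := by
          push_cast
          congr 2
          field_simp
      _ ≤ exp 1 * (exp N * exp N) * exp (-(16 * N)) := by gcongr
      _ = exp (1 - 14 * N) := by rw [← exp_add, ← exp_add, ← exp_add]; ring_nf
      _ < 1 := exp_lt_one_iff.2 (by linarith)
  obtain ⟨ω, hω⟩ := exists_forall_abs_sum_mul_toNat_sub_lt q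
    (fun UW : Finset V × Finset V => fun p => (pairCount UW.1 UW.2 p : ℝ))
    (s := 2 * (N : ℝ≥0) ^ 2) (t := 4 * (N : ℝ) ^ ((3 : ℝ) / 2))
    (fun UW => by push_cast; exact sum_pairCount_sq_le UW.1 UW.2)
    (by positivity) (by push_cast; exact hcount)
  exact ⟨ω, fun U W => (hω (U, W)).le⟩

theorem exists_rounding_abs_weightSum_sub_le (w : V → V → ℝ) (hsymm : ∀ x y, w x y = w y x)
    (h0 : ∀ x y, 0 ≤ w x y) (h1 : ∀ x y, w x y ≤ 1) :
    ∃ g : V → V → ℝ, (∀ x y, g x y = g y x) ∧ (∀ x y, g x y = 0 ∨ g x y = 1) ∧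
      ∀ U W : Finset V, |weightSum g U W - weightSum w U W|
        ≤ 4 * (Fintype.card V : ℝ) ^ ((3 : ℝ) / 2) := by
  obtain ⟨q, hq⟩ : ∃ q : Sym2 V → I, ∀ x y, (q s(x, y) : ℝ) = w x y :=
    ⟨fun p => ⟨Sym2.lift ⟨w, hsymm⟩ p, by induction p using Sym2.ind; exact ⟨h0 _ _, h1 _ _⟩⟩,
      fun _ _ => rfl⟩
  obtain ⟨ω, hω⟩ := exists_forall_abs_sum_pairCount_mul_le q
  refine ⟨fun x y => (ω s(x, y)).toNat, fun x y => by dsimp only; rw [Sym2.eq_swap],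
    fun x y => by cases ω s(x, y) <;> simp, fun U W => ?_⟩
  have hw : w = fun x y => (q s(x, y) : ℝ) := funext₂ fun x y => (hq x y).symm
  rw [hw, weightSum_eq_sum_pairCount_mul (fun p => ((ω p).toNat : ℝ)),
    weightSum_eq_sum_pairCount_mul (fun p => (q p : ℝ)), ← sum_sub_distrib]
  simpa only [mul_sub] using hω U W

end Rounding

/-- For every weighted graph on `N` vertices with weights in `[0,1]` there is an
unweighted graph on the same vertex set such that the irregularity of every partition
into at most `k` nonempty parts changes by at most `8k²N^(3/2)`. -/
theorem exists_unweighted_irregularity_approximation {V : Type*} [Fintype V] [DecidableEq V]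
    (w : V → V → ℝ) (hsymm : ∀ x y, w x y = w y x) (h0 : ∀ x y, 0 ≤ w x y)
    (h1 : ∀ x y, w x y ≤ 1) :
    ∃ g : V → V → ℝ, (∀ x y, g x y = g y x) ∧ (∀ x y, g x y = 0 ∨ g x y = 1) ∧
      ∀ (k : ℕ), 0 < k → ∀ P : Finset (Finset V), IsPartition P → P.card ≤ k →
        |wIrregPartition g P - wIrregPartition w P| ≤
          8 * (k : ℝ) ^ 2 * (Fintype.card V : ℝ) ^ ((3 : ℝ) / 2) := by
  obtain ⟨g, hg_symm, hg01, hbox⟩ := exists_rounding_abs_weightSum_sub_le w hsymm h0 h1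
  refine ⟨g, hg_symm, hg01, fun k _ P _ hPk => (abs_wIrregPartition_sub_le hbox P).trans ?_⟩
  have hPk' : (#P : ℝ) ≤ k := by exact_mod_cast hPk
  calc 2 * (#P : ℝ) ^ 2 * (4 * (Fintype.card V : ℝ) ^ ((3 : ℝ) / 2))
      ≤ 2 * (k : ℝ) ^ 2 * (4 * (Fintype.card V : ℝ) ^ ((3 : ℝ) / 2)) := by gcongr
    _ = 8 * (k : ℝ) ^ 2 * (Fintype.card V : ℝ) ^ ((3 : ℝ) / 2) := by ring
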